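/- arXiv:1602.04628 — 5 statements merged into one kernel-verified Lean document; each statement's English description precedes it below -/
import Mathlib

section
/- Let 0 < p < 1, and let k = k(n) = 4⌈ln n / ln(1/p)⌉. The probability that the uniform random graph G(n,m) with m = p·C(n,2) edges contains a set of k vertices spanning at least C(k,2) − k/2 edges is at most (en/k)^k · (e(k−1))^{k/2} · p^{C(k,2) − k/2}, and this bound tends to 0 as n → ∞. -/
/-!
Union bound: a dense `k`-set is witnessed by a `k`-set `K` (at most `(en/k)^k` choices) and
`q = C(k,2) - k/2` of its pairs (`C(C(k,2), k/2) ≤ (e(k-1))^(k/2)` choices), all present in the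
graph, which happens with probability `C(N-q, m-q)/C(N,m) ≤ (m/N)^q ≤ p^q`.
For even `k` the bound equals `((en/k)^2 e(k-1) p^(k-2))^(k/2)`, and the choice of `k` gives
`p^k ≤ n⁻⁴`, so the base is at most `e³/(p²n²)`, which tends to `0`.
-/

/-- The edges of the complete graph `K_n`: non-diagonal elements of `Sym2 (Fin n)`. -/
def knBoard (n : ℕ) : Finset (Sym2 (Fin n)) :=
  Finset.univ.filter fun e : Sym2 (Fin n) => ¬ e.IsDiag

open Finset Filter Real

namespace Nat

theorem choose_le_exp_mul_div_pow (n k : ℕ) : (n.choose k : ℝ) ≤ (exp 1 * n / k) ^ k := by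
  rcases k.eq_zero_or_pos with rfl | hk
  · simp
  have hk' : (0 : ℝ) < k := mod_cast hk
  calc (n.choose k : ℝ) ≤ (n : ℝ) ^ k / k ! := choose_le_pow_div k n
    _ = (n / k : ℝ) ^ k * ((k : ℝ) ^ k / k !) := by rw [div_pow]; field_simp
    _ ≤ (n / k : ℝ) ^ k * exp k := by gcongr; exact pow_div_factorial_le_exp _ hk'.le k
    _ = (exp 1 * n / k) ^ k := by rw [← exp_one_pow]; ring

theorem choose_two_add_self (j : ℕ) : (j + j).choose 2 = j * (2 * j - 1) := by
  rw [choose_two_right, show (j + j) * (j + j - 1) = 2 * (j * (2 * j - 1)) by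
    rw [← two_mul]; ring]
  exact Nat.mul_div_cancel_left _ two_pos

theorem choose_choose_two_sub_half_le {k : ℕ} (hk : Even k) :
    ((k.choose 2).choose (k.choose 2 - k / 2) : ℝ) ≤ (exp 1 * (k - 1)) ^ (k / 2) := by
  obtain ⟨j, rfl⟩ := hk
  rcases j.eq_zero_or_pos with rfl | hj
  · simp
  have hhalf : (j + j) / 2 = j := by omega
  rw [hhalf, choose_two_add_self, choose_symm (Nat.le_mul_of_pos_right _ (by omega))]
  convert choose_le_exp_mul_div_pow (j * (2 * j - 1)) j using 3
  have hj' : (j : ℝ) ≠ 0 := by positivity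
  rw [Nat.cast_mul, Nat.cast_sub (by omega)]
  push_cast
  field_simp
  ring

theorem descFactorial_mul_pow_le (q : ℕ) {m N : ℕ} (h : m ≤ N) :
    m.descFactorial q * N ^ q ≤ N.descFactorial q * m ^ q := by
  induction q with
  | zero => simp
  | succ q ih =>
    have hstep : (m - q) * N ≤ (N - q) * m := by
      rw [Nat.sub_mul, Nat.sub_mul, Nat.mul_comm m N]
      exact Nat.sub_le_sub_left (Nat.mul_le_mul_left q h) _
    rw [descFactorial_succ, descFactorial_succ, pow_succ, pow_succ]
    calc (m - q) * m.descFactorial q * (N ^ q * N)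
        = ((m - q) * N) * (m.descFactorial q * N ^ q) := by ring
      _ ≤ ((N - q) * m) * (N.descFactorial q * m ^ q) := Nat.mul_le_mul hstep ih
      _ = (N - q) * N.descFactorial q * (m ^ q * m) := by ring

theorem choose_mul_pow_le (q : ℕ) {m N : ℕ} (h : m ≤ N) :
    m.choose q * N ^ q ≤ N.choose q * m ^ q := by
  have := descFactorial_mul_pow_le q h
  rw [descFactorial_eq_factorial_mul_choose, descFactorial_eq_factorial_mul_choose,
    Nat.mul_assoc, Nat.mul_assoc] at this
  exact Nat.le_of_mul_le_mul_left this q.factorial_pos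

theorem choose_sub_div_choose_le {q m N : ℕ} (hqm : q ≤ m) (hmN : m ≤ N) :
    ((N - q).choose (m - q) : ℝ) / N.choose m ≤ ((m : ℝ) / N) ^ q := by
  have hNm : (0 : ℝ) < N.choose m := mod_cast choose_pos hmN
  have hNq : (0 : ℝ) < N.choose q := mod_cast choose_pos (hqm.trans hmN)
  have hmul : (N.choose m : ℝ) * m.choose q = N.choose q * (N - q).choose (m - q) :=
    mod_cast choose_mul hqm
  have hpow : (m.choose q : ℝ) * N ^ q ≤ N.choose q * m ^ q := mod_cast choose_mul_pow_le q hmN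
  have hNpow : (0 : ℝ) < (N : ℝ) ^ q := by
    rcases q.eq_zero_or_pos with rfl | hq
    · simp
    have : 0 < N := by omega
    positivity
  rw [div_pow, div_le_div_iff₀ hNm hNpow]
  refine le_of_mul_le_mul_left ?_ hNq
  calc (N.choose q : ℝ) * ((N - q).choose (m - q) * N ^ q)
      = N.choose m * (m.choose q * N ^ q) := by rw [← mul_assoc, ← hmul]; ring
    _ ≤ N.choose m * (N.choose q * m ^ q) := by gcongr
    _ = N.choose q * (m ^ q * N.choose m) := by ring

end Nat

namespace Finset

variable {α ι : Type*} [DecidableEq α]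

theorem card_filter_subset_powersetCard_le {s S : Finset α} (hS : S ⊆ s) (m : ℕ) :
    #{E ∈ s.powersetCard m | S ⊆ E} ≤ (#s - #S).choose (m - #S) := by
  rw [← card_sdiff_of_subset hS, ← card_powersetCard]
  refine card_le_card_of_injOn (· \ S) (fun E hE => ?_) (fun E₁ hE₁ E₂ hE₂ h => ?_)
  · rw [mem_coe, mem_filter, mem_powersetCard] at hE
    rw [mem_coe, mem_powersetCard]
    exact ⟨sdiff_subset_sdiff hE.1.1 le_rfl, by rw [card_sdiff_of_subset hE.2, hE.1.2]⟩
  · rw [mem_coe, mem_filter] at hE₁ hE₂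
    rw [← sdiff_union_of_subset hE₁.2, ← sdiff_union_of_subset hE₂.2]
    exact congrArg (· ∪ S) h

/-- Union bound over the blocks `B i` and over the `q`-subsets of `s ∩ B i` that `E` may contain. -/
theorem card_filter_exists_le_card_inter_le (s : Finset α) (I : Finset ι) (B : ι → Finset α)
    {b : ℕ} (hB : ∀ i ∈ I, #(s ∩ B i) ≤ b) (q m : ℕ) :
    #{E ∈ s.powersetCard m | ∃ i ∈ I, q ≤ #(E ∩ B i)}
      ≤ #I * (b.choose q * (#s - q).choose (m - q)) := by
  have hcover : {E ∈ s.powersetCard m | ∃ i ∈ I, q ≤ #(E ∩ B i)} ⊆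
      I.biUnion fun i => ((s ∩ B i).powersetCard q).biUnion fun S =>
        {E ∈ s.powersetCard m | S ⊆ E} := by
    intro E hE
    obtain ⟨hEm, i, hi, hq⟩ := mem_filter.mp hE
    obtain ⟨S, hSE, rfl⟩ := exists_subset_card_eq hq
    have hEs := (mem_powersetCard.mp hEm).1
    refine mem_biUnion.mpr ⟨i, hi, mem_biUnion.mpr ⟨S, ?_, mem_filter.mpr ⟨hEm, ?_⟩⟩⟩
    · exact mem_powersetCard.mpr ⟨hSE.trans (inter_subset_inter_right hEs), rfl⟩
    · exact hSE.trans inter_subset_left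
  refine (card_le_card hcover).trans (card_biUnion_le_card_mul _ _ _ fun i hi => ?_)
  refine (card_biUnion_le_card_mul _ _ ((#s - q).choose (m - q)) fun S hS => ?_).trans ?_
  · obtain ⟨hSs, rfl⟩ := mem_powersetCard.mp hS
    exact card_filter_subset_powersetCard_le (hSs.trans inter_subset_left) m
  · rw [card_powersetCard]
    exact Nat.mul_le_mul_right _ (Nat.choose_le_choose q (hB i hi))

theorem card_filter_exists_le_card_inter_div_le (s : Finset α) (I : Finset ι)
    (B : ι → Finset α) {b : ℕ} (hB : ∀ i ∈ I, #(s ∩ B i) ≤ b) (q m : ℕ) :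
    (#{E ∈ s.powersetCard m | ∃ i ∈ I, q ≤ #(E ∩ B i)} : ℝ) / (#s).choose m
      ≤ #I * b.choose q * ((m : ℝ) / #s) ^ q := by
  by_cases hqm : q ≤ m ∧ m ≤ #s
  · calc (#{E ∈ s.powersetCard m | ∃ i ∈ I, q ≤ #(E ∩ B i)} : ℝ) / (#s).choose m
        ≤ (#I * (b.choose q * (#s - q).choose (m - q)) : ℕ) / (#s).choose m := by
          gcongr
          exact card_filter_exists_le_card_inter_le s I B hB q m
      _ = #I * b.choose q * (((#s - q).choose (m - q) : ℕ) / (#s).choose m) := by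
          push_cast; ring
      _ ≤ #I * b.choose q * ((m : ℝ) / #s) ^ q := by
          gcongr
          exact Nat.choose_sub_div_choose_le hqm.1 hqm.2
  · have hempty : {E ∈ s.powersetCard m | ∃ i ∈ I, q ≤ #(E ∩ B i)} = ∅ := by
      refine filter_false_of_mem fun E hE ⟨i, _, hq⟩ => hqm ⟨?_, ?_⟩
      · exact (mem_powersetCard.mp hE).2 ▸ hq.trans (card_le_card inter_subset_left)
      · exact (mem_powersetCard.mp hE).2 ▸ card_le_card (mem_powersetCard.mp hE).1
    rw [hempty, card_empty, Nat.cast_zero, zero_div]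
    positivity

end Finset

theorem card_knBoard (n : ℕ) : #(knBoard n) = n.choose 2 := by
  rw [knBoard, ← Fintype.card_subtype, Sym2.card_subtype_not_diag, Fintype.card_fin]

theorem card_knBoard_inter_sym2 {n : ℕ} (K : Finset (Fin n)) :
    #(knBoard n ∩ K.sym2) = (#K).choose 2 := by
  have : knBoard n ∩ K.sym2 = {e ∈ (K ×ˢ K).image Sym2.mk.uncurry | ¬ e.IsDiag} := by
    ext e
    simp only [knBoard, ← sym2_eq_image, mem_inter, mem_filter, mem_univ, true_and]
    tauto
  rw [this, Sym2.filter_image_mk_not_isDiag, Sym2.card_image_offDiag]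

noncomputable def denseBound (p x : ℝ) (k : ℕ) : ℝ :=
  (exp 1 * x / k) ^ k * (exp 1 * (k - 1)) ^ (k / 2) * p ^ (k.choose 2 - k / 2)

theorem card_div_le_denseBound {n k m : ℕ} {p : ℝ} (hp : 0 ≤ p) (hm : (m : ℝ) ≤ p * n.choose 2)
    (hk : Even k) :
    (Nat.card {E : Finset (Sym2 (Fin n)) //
        E ∈ (knBoard n).powersetCard m ∧
        ∃ K : Finset (Fin n), K.card = k ∧
          k.choose 2 - k / 2 ≤ (E.filter fun e => e ∈ K.sym2).card} : ℝ) /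
      ((knBoard n).powersetCard m).card ≤ denseBound p n k := by
  have hcard : Nat.card {E : Finset (Sym2 (Fin n)) //
      E ∈ (knBoard n).powersetCard m ∧
      ∃ K : Finset (Fin n), K.card = k ∧
        k.choose 2 - k / 2 ≤ (E.filter fun e => e ∈ K.sym2).card} =
      #{E ∈ (knBoard n).powersetCard m |
        ∃ K ∈ (univ : Finset (Fin n)).powersetCard k, k.choose 2 - k / 2 ≤ #(E ∩ K.sym2)} := by
    rw [Nat.card_eq_fintype_card, Fintype.card_subtype]
    congr 1
    ext E
    simp only [mem_filter, mem_univ, true_and, mem_powersetCard, subset_univ,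
      filter_mem_eq_inter]
  have hB : ∀ K ∈ (univ : Finset (Fin n)).powersetCard k, #(knBoard n ∩ K.sym2) ≤ k.choose 2 :=
    fun K hK => (card_knBoard_inter_sym2 K).trans_le (by rw [(mem_powersetCard.mp hK).2])
  have hmp : (m : ℝ) / n.choose 2 ≤ p := div_le_of_le_mul₀ (by positivity) hp hm
  rw [hcard, card_powersetCard]
  calc _ ≤ ((#((univ : Finset (Fin n)).powersetCard k) : ℕ) : ℝ) *
        (k.choose 2).choose (k.choose 2 - k / 2) *
          ((m : ℝ) / #(knBoard n)) ^ (k.choose 2 - k / 2) :=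
        card_filter_exists_le_card_inter_div_le _ _ _ hB _ _
    _ ≤ denseBound p n k := by
        rw [card_powersetCard, card_univ, Fintype.card_fin, card_knBoard, denseBound]
        have hchoose := Nat.choose_le_exp_mul_div_pow n k
        have hchoose2 := Nat.choose_choose_two_sub_half_le hk
        have hfirst := mul_le_mul hchoose hchoose2 (by positivity)
          ((Nat.cast_nonneg _).trans hchoose)
        exact mul_le_mul hfirst (pow_le_pow_left₀ (by positivity) hmp _) (by positivity)
          ((by positivity : (0 : ℝ) ≤ _ * _).trans hfirst)

theorem denseBound_eq_pow (p x : ℝ) {k : ℕ} (hk : Even k) :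
    denseBound p x k = ((exp 1 * x / k) ^ 2 * (exp 1 * (k - 1)) * p ^ (k - 2)) ^ (k / 2) := by
  obtain ⟨j, rfl⟩ := hk
  have hhalf : (j + j) / 2 = j := by omega
  have hexp : (j + j).choose 2 - j = (j + j - 2) * j := by
    rw [Nat.choose_two_add_self, Nat.mul_comm, ← Nat.sub_one_mul]
    congr 1
    omega
  rw [denseBound, hhalf, hexp, pow_mul p]
  generalize exp 1 * x / ((j + j : ℕ) : ℝ) = A
  generalize exp 1 * (((j + j : ℕ) : ℝ) - 1) = B
  ring

theorem pow_ceil_logb_one_div_le_inv {p x : ℝ} (hp0 : 0 < p) (hp1 : p < 1) (hx : 0 < x) :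
    p ^ ⌈log x / log (1 / p)⌉₊ ≤ x⁻¹ := by
  have hb : 1 / p ≠ 1 := by rw [ne_eq, div_eq_one_iff_eq hp0.ne']; exact hp1.ne'
  calc p ^ ⌈log x / log (1 / p)⌉₊ = p ^ (⌈logb (1 / p) x⌉₊ : ℝ) := by
        rw [log_div_log, rpow_natCast]
    _ ≤ p ^ logb (1 / p) x := rpow_le_rpow_of_exponent_ge hp0 hp1.le (Nat.le_ceil _)
    _ = ((1 / p) ^ logb (1 / p) x)⁻¹ := by rw [one_div, inv_rpow hp0.le, inv_inv]
    _ = x⁻¹ := by rw [rpow_logb (by positivity) hb hx]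

theorem denseBound_base_le {p x : ℝ} {k : ℕ} (hp0 : 0 < p) (hx : 0 < x) (hk : 2 ≤ k)
    (hpk : p ^ k ≤ (x ^ 4)⁻¹) :
    (exp 1 * x / k) ^ 2 * (exp 1 * (k - 1)) * p ^ (k - 2) ≤ exp 1 ^ 3 / (p ^ 2 * x ^ 2) := by
  have hk' : (2 : ℝ) ≤ k := mod_cast hk
  have hfrac : ((k : ℝ) - 1) / k ^ 2 ≤ 1 := by
    rw [div_le_one (by positivity)]
    nlinarith
  calc (exp 1 * x / k) ^ 2 * (exp 1 * (k - 1)) * p ^ (k - 2)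
      = exp 1 ^ 3 * x ^ 2 * (((k : ℝ) - 1) / k ^ 2) * (p ^ k / p ^ 2) := by
        rw [pow_sub₀ _ hp0.ne' hk]
        field_simp
    _ ≤ exp 1 ^ 3 * x ^ 2 * 1 * ((x ^ 4)⁻¹ / p ^ 2) := by
        gcongr
    _ = exp 1 ^ 3 / (p ^ 2 * x ^ 2) := by field_simp

theorem denseBound_nonneg {p x : ℝ} {k : ℕ} (hp : 0 ≤ p) (hx : 0 ≤ x) (hk : 1 ≤ k) :
    0 ≤ denseBound p x k := by
  have : (0 : ℝ) ≤ k - 1 := sub_nonneg.mpr (mod_cast hk)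
  unfold denseBound
  positivity

theorem denseBound_le {p x : ℝ} {k : ℕ} (hp0 : 0 < p) (hx : 0 < x) (hk : Even k) (hk2 : 2 ≤ k)
    (hpk : p ^ k ≤ (x ^ 4)⁻¹) (hle : exp 1 ^ 3 / (p ^ 2 * x ^ 2) ≤ 1) :
    denseBound p x k ≤ exp 1 ^ 3 / (p ^ 2 * x ^ 2) := by
  have hr := denseBound_base_le hp0 hx hk2 hpk
  have hr0 : 0 ≤ (exp 1 * x / k) ^ 2 * (exp 1 * (k - 1)) * p ^ (k - 2) := by
    have : (0 : ℝ) ≤ k - 1 := sub_nonneg.mpr (mod_cast (by omega : 1 ≤ k))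
    positivity
  rw [denseBound_eq_pow p x hk]
  exact (pow_le_of_le_one hr0 (hr.trans hle) (by omega)).trans hr

theorem tendsto_denseBound {p : ℝ} (hp0 : 0 < p) (hp1 : p < 1) (k : ℕ → ℕ)
    (hk : ∀ n, k n = 4 * ⌈log n / log (1 / p)⌉₊) :
    Tendsto (fun n : ℕ => denseBound p n (k n)) atTop (nhds 0) := by
  have hsmall : Tendsto (fun n : ℕ => exp 1 ^ 3 / (p ^ 2 * (n : ℝ) ^ 2)) atTop (nhds 0) :=
    tendsto_const_nhds.div_atTop <| tendsto_const_nhds.pos_mul_atTop (by positivity) <|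
      (tendsto_pow_atTop two_ne_zero).comp tendsto_natCast_atTop_atTop
  have hk2 : ∀ n ≥ 2, 2 ≤ k n := fun n hn => by
    have hn' : (1 : ℝ) < n := mod_cast hn
    have : 1 ≤ ⌈log n / log (1 / p)⌉₊ := Nat.one_le_ceil_iff.mpr <|
      div_pos (log_pos hn') (log_pos (one_lt_one_div hp0 hp1))
    rw [hk n]
    omega
  refine squeeze_zero' ?_ ?_ hsmall
  · filter_upwards [eventually_ge_atTop 2] with n hn
    exact denseBound_nonneg hp0.le n.cast_nonneg (by linarith [hk2 n hn])
  · filter_upwards [eventually_ge_atTop 2, hsmall.eventually (ge_mem_nhds one_pos)] with n hn hle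
    have hpk : p ^ k n ≤ ((n : ℝ) ^ 4)⁻¹ := by
      rw [hk n, pow_mul', ← inv_pow]
      exact pow_le_pow_left₀ (by positivity) (pow_ceil_logb_one_div_le_inv hp0 hp1 (by positivity)) 4
    have hk : Even (k n) := by rw [hk n]; exact (by decide : Even 4).mul_right _
    exact denseBound_le hp0 (by positivity) hk (hk2 n hn) hpk hle

/-- for `0 < p < 1` and `k = k(n) = 4⌈ln n / ln(1/p)⌉`, the probability that the
uniform random graph `G(n,m)` with `m = p·C(n,2)` edges contains a set of `k` vertices spanning
at least `C(k,2) - k/2` edges is at most `(en/k)^k (e(k-1))^{k/2} p^{C(k,2)-k/2}`, and this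
bound tends to `0` as `n → ∞`. -/
theorem stmt_3 (p : ℝ) (hp0 : 0 < p) (hp1 : p < 1)
    (k m : ℕ → ℕ)
    (hk : ∀ n, k n = 4 * ⌈Real.log n / Real.log (1 / p)⌉₊)
    (hm : ∀ n, (m n : ℝ) ≤ p * (n.choose 2 : ℝ)) :
    (∀ n : ℕ,
      (Nat.card {E : Finset (Sym2 (Fin n)) //
          E ∈ (knBoard n).powersetCard (m n) ∧
          ∃ K : Finset (Fin n), K.card = k n ∧
            (k n).choose 2 - k n / 2 ≤ (E.filter fun e => e ∈ K.sym2).card} : ℝ) /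
        ((knBoard n).powersetCard (m n)).card
      ≤ (Real.exp 1 * n / k n) ^ (k n) * (Real.exp 1 * ((k n : ℝ) - 1)) ^ (k n / 2) *
          p ^ ((k n).choose 2 - k n / 2)) ∧
    Filter.Tendsto (fun n : ℕ =>
        (Real.exp 1 * n / k n) ^ (k n) * (Real.exp 1 * ((k n : ℝ) - 1)) ^ (k n / 2) *
          p ^ ((k n).choose 2 - k n / 2))
      Filter.atTop (nhds 0) := by
  have hk_even : ∀ n, Even (k n) := fun n => by
    rw [hk n]; exact (by decide : Even 4).mul_right _
  exact ⟨fun n => card_div_le_denseBound hp0.le (hm n) (hk_even n),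
    tendsto_denseBound hp0 hp1 k hk⟩
end

section
/- Fix a strategy S of the clever player, m ≤ C(n,2), and a realizable play-sequence Γ = (Γ_1,…,Γ_m) with clever-move positions C and random-move positions R partitioning [m]. The number of permutations σ of E(K_n) such that the random player playing the permutation strategy σ against S produces play-sequence Γ equals (C(n,2) − m)! · ∏_{j ∈ C} (C(n,2) − j + 1). -/
/-!
Put `N = C(n,2)` and `τ = σ⁻¹`, so that `τ (enum e)` is the position of the edge `e` in the
ordering. The three conditions say exactly that the positions `v j = τ (enum (Γ j))` of the
played edges form a greedy sequence: each `v i` is a new position, and at a random move `i ∈ R`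
it is the least position not used before. The permutations `τ` with prescribed values on the
`m` played edges form a coset of their pointwise stabiliser, of order `(N - m)!`; greedy
sequences are counted move by move: a random move has one choice, a clever move at (0-indexed)
time `j` has `N - j`.
-/

open Equiv Function MulAction

theorem MulAction.card_subtype_smul_eq {G X : Type*} [Group G] [MulAction G X]
    [IsPretransitive G X] (x : X) (p : X → Prop) :
    Nat.card {g : G // p (g • x)} = Nat.card {y // p y} * Nat.card (stabilizer G x) := by
  let e : {g : G // p (g • x)} ≃ {o : orbit G x // p o} × stabilizer G x :=
    ((orbitProdStabilizerEquivGroup G x).symm.subtypeEquiv fun _ => by rfl).trans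
      prodSubtypeFstEquivSubtypeProd
  have hall : ∀ {y}, p y → y ∈ orbit G x := fun {y} _ =>
    mem_orbit_iff.2 (exists_smul_eq G x y)
  rw [Nat.card_congr e, Nat.card_prod, Nat.card_congr (subtypeSubtypeEquivSubtype hall)]

instance Equiv.Perm.isPretransitive_embedding {ι β : Type*} [Finite ι] :
    IsPretransitive (Perm β) (ι ↪ β) :=
  ⟨exists_smul_eq_embedding⟩

theorem Equiv.Perm.card_stabilizer_embedding {ι β : Type*} [Finite ι] [Finite β]
    (b : ι ↪ β) :
    Nat.card (stabilizer (Perm β) b) = (Nat.card β - Nat.card ι).factorial := by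
  have := Fintype.ofFinite ι
  have := Fintype.ofFinite β
  have hle := Finite.card_le_of_embedding b
  have hcard := (stabilizer (Perm β) b).card_mul_index
  rw [index_stabilizer_of_transitive, Nat.card_perm, Nat.card_eq_fintype_card (α := ι ↪ β),
    Fintype.card_embedding_eq, ← Nat.card_eq_fintype_card, ← Nat.card_eq_fintype_card,
    ← Nat.factorial_mul_descFactorial hle] at hcard
  exact Nat.eq_of_mul_eq_mul_right (Nat.descFactorial_pos.2 hle) hcard

noncomputable abbrev Finset.preimageCastSucc {m : ℕ} (R : Finset (Fin (m + 1))) :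
    Finset (Fin m) :=
  R.preimage Fin.castSucc (Fin.castSucc_injective m).injOn

theorem Fin.prod_compl_eq_prod_preimageCastSucc_mul {M : Type*} [CommMonoid M] {m : ℕ}
    (R : Finset (Fin (m + 1))) (f : Fin (m + 1) → M) :
    ∏ j ∈ Rᶜ, f j =
      (∏ j ∈ R.preimageCastSucc ᶜ, f j.castSucc) *
        if Fin.last m ∈ R then 1 else f (Fin.last m) := by
  rw [← Finset.univ_inter Rᶜ, ← Finset.prod_ite_mem, Fin.prod_univ_castSucc,
    ← Finset.univ_inter R.preimageCastSucc ᶜ, ← Finset.prod_ite_mem]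
  by_cases h : Fin.last m ∈ R <;> simp [h]

section Greedy

variable {α : Type*} [LinearOrder α] {m : ℕ}

-- `v i` is the position in the ordering of the `i`-th played edge.
def IsGreedy (R : Finset (Fin m)) (v : Fin m → α) : Prop :=
  ∀ i, (∀ j < i, v j ≠ v i) ∧ (i ∈ R → ∀ y, (∀ j < i, v j ≠ y) → v i ≤ y)

def IsGreedyNext (random : Prop) (w : Fin m → α) (y : α) : Prop :=
  y ∉ Set.range w ∧ (random → y ∈ lowerBounds (Set.range w)ᶜ)

theorem IsGreedy.injective {R : Finset (Fin m)} {v : Fin m → α} (h : IsGreedy R v) :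
    Injective v := by
  intro a b hab
  by_contra hne
  rcases lt_or_gt_of_ne hne with hlt | hlt
  · exact (h b).1 a hlt hab
  · exact (h a).1 b hlt hab.symm

theorem isGreedy_snoc_iff {R : Finset (Fin (m + 1))} {w : Fin m → α} {y : α} :
    IsGreedy R (Fin.snoc w y : Fin (m + 1) → α) ↔
      IsGreedy R.preimageCastSucc w ∧ IsGreedyNext (Fin.last m ∈ R) w y := by
  simp [IsGreedy, IsGreedyNext, Fin.forall_fin_succ', lowerBounds,
    fun i : Fin m => (Fin.castSucc_lt_last i).asymm]

def isGreedySnocEquiv (R : Finset (Fin (m + 1))) :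
    {v : Fin (m + 1) → α // IsGreedy R v} ≃
      Σ w : {w : Fin m → α // IsGreedy R.preimageCastSucc w},
        {y // IsGreedyNext (Fin.last m ∈ R) w.1 y} where
  toFun v :=
    have h := isGreedy_snoc_iff.1 ((Fin.snoc_init_self v.1).symm ▸ v.2)
    ⟨⟨Fin.init v.1, h.1⟩, ⟨v.1 (Fin.last m), h.2⟩⟩
  invFun p := ⟨Fin.snoc p.1.1 p.2.1, isGreedy_snoc_iff.2 ⟨p.1.2, p.2.2⟩⟩
  left_inv v := Subtype.ext (Fin.snoc_init_self v.1)
  right_inv _ := Sigma.subtype_ext (Subtype.ext (Fin.init_snoc (α := fun _ => α) _ _))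
    (Fin.snoc_last (α := fun _ => α) _ _)

theorem card_isGreedyNext [Fintype α] {w : Fin m → α} (hw : Injective w)
    (hm : m < Fintype.card α) (random : Prop) [Decidable random] :
    Nat.card {y // IsGreedyNext random w y} = if random then 1 else Fintype.card α - m := by
  have hcard : Nat.card ↥(Set.range w)ᶜ = Fintype.card α - m := by
    rw [Nat.card_eq_fintype_card, Fintype.card_compl_set, Set.card_range_of_injective hw,
      Fintype.card_fin]
  by_cases hrandom : random
  · obtain ⟨y, hy, hy_least⟩ :
        ∃ y ∈ (Set.range w)ᶜ, ∀ z ∈ (Set.range w)ᶜ, y ≤ z :=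
      Set.exists_min_image _ id (Set.toFinite _)
        (Set.nonempty_coe_sort.1 (Nat.card_pos_iff.1 (hcard ▸ Nat.sub_pos_of_lt hm)).1)
    simp only [IsGreedyNext, hrandom, true_imp_iff, if_true]
    rw [Nat.card_eq_one_iff_unique]
    exact ⟨⟨fun a b => Subtype.ext (IsLeast.unique (s := (Set.range w)ᶜ) a.2 b.2)⟩,
      ⟨⟨y, hy, hy_least⟩⟩⟩
  · simp only [IsGreedyNext, hrandom, false_imp_iff, and_true, if_false]
    exact hcard

theorem card_isGreedy [Fintype α] : ∀ {m : ℕ} (R : Finset (Fin m)), m ≤ Fintype.card α →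
    Nat.card {v : Fin m → α // IsGreedy R v} = ∏ j ∈ Rᶜ, (Fintype.card α - j)
  | 0, R, _ => by rw [Finset.eq_empty_of_isEmpty Rᶜ]; simp [IsGreedy]
  | m + 1, R, hm => by
    classical
    rw [Nat.card_congr (isGreedySnocEquiv R), Nat.card_sigma,
      Finset.sum_congr rfl fun w _ => card_isGreedyNext w.2.injective hm _, Finset.sum_const,
      Finset.card_univ, ← Nat.card_eq_fintype_card, card_isGreedy _ (by omega),
      Fin.prod_compl_eq_prod_preimageCastSucc_mul]
    simp

theorem card_embedding_isGreedy (R : Finset (Fin m)) :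
    Nat.card {v : Fin m ↪ α // IsGreedy R v} = Nat.card {v : Fin m → α // IsGreedy R v} :=
  Nat.card_congr
    { toFun v := ⟨v.1, v.2⟩
      invFun v := ⟨⟨v.1, v.2.injective⟩, v.2⟩
      left_inv _ := rfl
      right_inv _ := rfl }

theorem isGreedy_comp_iff {E : Type*} (pos : E ≃ α) {Γ : Fin m → E} (hΓ : Injective Γ)
    (R : Finset (Fin m)) :
    IsGreedy R (pos ∘ Γ) ↔
      (∀ i ∈ R, ∀ i' ∈ R, i < i' → pos (Γ i) < pos (Γ i')) ∧
      (∀ i ∈ R, ∀ e, (∀ j, Γ j ≠ e) → pos (Γ i) < pos e) ∧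
      (∀ j, j ∉ R → ∀ i ∈ R, i < j → pos (Γ i) < pos (Γ j)) := by
  have inj : Injective (pos ∘ Γ) := pos.injective.comp hΓ
  constructor
  · intro h
    have later : ∀ i ∈ R, ∀ j, i < j → pos (Γ i) < pos (Γ j) := fun i hi j hij =>
      ((h i).2 hi _ fun k hk => inj.ne (hk.trans hij).ne).lt_of_ne (inj.ne hij.ne)
    refine ⟨fun i hi i' _ => later i hi i', fun i hi e he => ?_, fun j _ i hi => later i hi j⟩
    exact ((h i).2 hi _ fun k _ h => he k (pos.injective h)).lt_of_ne
      fun h => he i (pos.injective h)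
  · rintro ⟨hRR, hRout, hCR⟩ i
    refine ⟨fun j hj => inj.ne hj.ne, fun hi y hy => ?_⟩
    obtain ⟨e, rfl⟩ := pos.surjective y
    by_cases he : ∃ j, Γ j = e
    · obtain ⟨j, rfl⟩ := he
      rcases lt_trichotomy j i with hji | rfl | hij
      · exact absurd rfl (hy j hji)
      · exact le_rfl
      · by_cases hj : j ∈ R
        exacts [(hRR i hi j hj hij).le, (hCR j hj i hi hij).le]
    · simp only [not_exists] at he
      exact (hRout i hi e he).le

end Greedy

/-- fix `m ≤ C(n,2)`, a play-sequence `Γ` of distinct edges of `K_n`, with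
random-move positions `R` and clever-move positions `Rᶜ`. The number of orderings (permutations)
`σ` of the edge set of `K_n` (identified with `Fin (C(n,2))` via a bijection `enum`; the edge at
position `t` of the ordering is `enum.symm (σ t)`, so edge `e` has position `σ.symm (enum e)`)
which produce the play-sequence `Γ` when the random player follows the permutation strategy
`σ` — characterized by: (1) the edges at positions in `R` appear in `σ` in the same relative
order as in `Γ`; (2) the edges at positions in `R` precede all edges not occurring in `Γ`;
(3) for every clever position `j`, the edge `Γ j` comes after all edges `Γ i` with `i ∈ R`,
`i < j` — equals `(C(n,2) - m)! · ∏_{j ∈ Rᶜ} (C(n,2) - j)` (positions `0`-indexed). -/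
theorem stmt_8 (n m : ℕ) (hm : m ≤ n.choose 2)
    (enum : {e : Sym2 (Fin n) // ¬ e.IsDiag} ≃ Fin (n.choose 2))
    (R : Finset (Fin m))
    (Γ : Fin m → {e : Sym2 (Fin n) // ¬ e.IsDiag})
    (hΓ : Function.Injective Γ) :
    Nat.card {σ : Equiv.Perm (Fin (n.choose 2)) //
        (∀ i ∈ R, ∀ i' ∈ R, i < i' → σ.symm (enum (Γ i)) < σ.symm (enum (Γ i'))) ∧
        (∀ i ∈ R, ∀ e : {e : Sym2 (Fin n) // ¬ e.IsDiag}, (∀ j : Fin m, Γ j ≠ e) →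
          σ.symm (enum (Γ i)) < σ.symm (enum e)) ∧
        (∀ j : Fin m, j ∉ R → ∀ i ∈ R, i < j →
          σ.symm (enum (Γ i)) < σ.symm (enum (Γ j)))} =
      (n.choose 2 - m).factorial * ∏ j ∈ Rᶜ, (n.choose 2 - (j : ℕ)) := by
  let b : Fin m ↪ Fin (n.choose 2) := ⟨enum ∘ Γ, enum.injective.comp hΓ⟩
  calc _ = Nat.card {τ : Perm (Fin (n.choose 2)) // IsGreedy R ⇑(τ • b)} :=
        Nat.card_congr <| (Equiv.inv _).subtypeEquiv fun σ =>
          (isGreedy_comp_iff (enum.trans σ.symm) hΓ R).symm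
    _ = Nat.card {v : Fin m ↪ Fin (n.choose 2) // IsGreedy R v} *
          (n.choose 2 - m).factorial := by
        rw [card_subtype_smul_eq b fun v => IsGreedy R v, Perm.card_stabilizer_embedding,
          Nat.card_fin, Nat.card_fin]
    _ = _ := by
        rw [card_embedding_isGreedy, card_isGreedy R (by simpa using hm), Fintype.card_fin,
          mul_comm]
end

section
/- Let M be a matching in a graph G on an even number n of vertices with 2|M| < n, let a be a vertex unmatched by M, and let B be a graph on the same vertex set with maximum degree at most (1 − ε/4)n that contains no complete bipartite subgraph with parts of sizes (ε/8)n and l. Suppose 2|M| ≥ n − k where k = O(log n), the set L of unmatched vertices other than a has |L| ≥ l, and define X_a = {u : au ∉ B, au ∉ M-edges} and X_a^+ = {v : ∃u ∈ X_a, uv ∈ M}. If |X_a^+| ≥ (ε/8)n, then there exists an edge between L and X_a^+ that is not in B. -/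
lemma SimpleGraph.exists_ne_not_adj_of_disjoint {V : Type*} (G : SimpleGraph V)
    {A C : Finset V} (hAC : Disjoint A C) (h : ¬ ∀ x ∈ A, ∀ y ∈ C, G.Adj x y) :
    ∃ x ∈ C, ∃ y ∈ A, x ≠ y ∧ ¬ G.Adj x y := by
  push Not at h
  obtain ⟨y, hyA, x, hxC, hxy⟩ := h
  exact ⟨x, hxC, y, hyA, fun h => Finset.disjoint_left.mp hAC hyA (h ▸ hxC),
    fun h => hxy h.symm⟩

theorem stmt_12_general {V : Type*} (n l : ℕ)
    (ε : ℝ)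
    (M : Finset (Sym2 V))
    (a : V)
    (B : SimpleGraph V)
    (hnobip : ¬ ∃ A C : Finset V, Disjoint A C ∧ ε / 8 * (n : ℝ) ≤ (A.card : ℝ) ∧
      l ≤ C.card ∧ ∀ x ∈ A, ∀ y ∈ C, B.Adj x y)
    (L : Finset V) (hL : ∀ v : V, v ∈ L ↔ v ≠ a ∧ ∀ e ∈ M, v ∉ e)
    (hLcard : l ≤ L.card)
    (Xa : Finset V)
    (Xplus : Finset V) (hXplus : ∀ v : V, v ∈ Xplus ↔ ∃ u ∈ Xa, s(u, v) ∈ M)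
    (hXcard : ε / 8 * (n : ℝ) ≤ (Xplus.card : ℝ)) :
    ∃ x ∈ L, ∃ y ∈ Xplus, x ≠ y ∧ ¬ B.Adj x y := by
  have hdisj : Disjoint Xplus L := by
    refine Finset.disjoint_left.mpr fun v hv hvL => ?_
    obtain ⟨u, -, huv⟩ := (hXplus v).mp hv
    exact ((hL v).mp hvL).2 _ huv (Sym2.mem_mk_right u v)
  exact B.exists_ne_not_adj_of_disjoint hdisj
    fun hadj => hnobip ⟨Xplus, L, hdisj, hXcard, hLcard, hadj⟩

/-- let `M` be a matching in Maker's graph on an even number `n` of vertices with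
`n - k ≤ 2|M| < n` (where `k = O(log n)`), let `a` be an unmatched vertex, and let `B` be a
graph on the same vertex set with maximum degree at most `(1 - ε/4)n` containing no complete
bipartite subgraph with parts of sizes `(ε/8)n` and `l`. Let `L` be the set of unmatched
vertices other than `a`, with `|L| ≥ l`; let `X_a` be the set of vertices `u` with `au` vacant
(not in `B` and not a matching edge) and `X_a⁺` the set of `M`-partners of vertices of `X_a`.
If `|X_a⁺| ≥ (ε/8)n`, then there is an edge between `L` and `X_a⁺` not in `B`. -/
theorem stmt_12 {V : Type*} [Fintype V] [DecidableEq V] (n k l : ℕ)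
    (hcard : Fintype.card V = n) (heven : Even n)
    (ε : ℝ) (hε : 0 < ε)
    (M : Finset (Sym2 V))
    (hM1 : ∀ e ∈ M, ¬ e.IsDiag)
    (hM2 : ∀ e ∈ M, ∀ f ∈ M, e ≠ f → ∀ v, v ∈ e → v ∉ f)
    (hMlt : 2 * M.card < n) (hMge : n - k ≤ 2 * M.card)
    (a : V) (ha : ∀ e ∈ M, a ∉ e)
    (B : SimpleGraph V) [DecidableRel B.Adj]
    (hdeg : ∀ v : V, (B.degree v : ℝ) ≤ (1 - ε / 4) * n)
    (hnobip : ¬ ∃ A C : Finset V, Disjoint A C ∧ ε / 8 * (n : ℝ) ≤ (A.card : ℝ) ∧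
      l ≤ C.card ∧ ∀ x ∈ A, ∀ y ∈ C, B.Adj x y)
    (L : Finset V) (hL : ∀ v : V, v ∈ L ↔ v ≠ a ∧ ∀ e ∈ M, v ∉ e)
    (hLcard : l ≤ L.card)
    (Xa : Finset V) (hXa : ∀ u : V, u ∈ Xa ↔ u ≠ a ∧ ¬ B.Adj a u ∧ s(a, u) ∉ M)
    (Xplus : Finset V) (hXplus : ∀ v : V, v ∈ Xplus ↔ ∃ u ∈ Xa, s(u, v) ∈ M)
    (hXcard : ε / 8 * (n : ℝ) ≤ (Xplus.card : ℝ)) :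
    ∃ x ∈ L, ∃ y ∈ Xplus, x ≠ y ∧ ¬ B.Adj x y :=
  stmt_12_general n l ε M a B hnobip L hL hLcard Xa Xplus hXplus hXcard
end

section
/- Let P be a family of vertex-disjoint paths partitioning the vertex set, |P| ≥ 2, with distinct paths α, β, γ ∈ P (γ distinct from α and β), where a is an endpoint of α, b an endpoint of β, and v, u are consecutive vertices on γ (v immediately preceding u). Then removing α, β, γ and adding the two paths obtained from the edges au and bv — namely (α reversed, then a–u, then the tail of γ from u onward) and (the head of γ up to v, then v–b, then β reversed) — yields a family of |P| − 1 vertex-disjoint paths partitioning the vertex set. -/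
/-! Cutting `γ` between positions `j - 1` and `j` and gluing its two pieces onto `α` and `β`
gives two vertex-disjoint paths whose vertices are exactly those of `α`, `β` and `γ`. Exchanging
a subfamily of a path partition for a family of disjoint paths on the same vertices yields again
a path partition, and here three paths are exchanged for two. -/

open Finset

section PathPartition

variable {V : Type*} {P R R' : Finset (List V)}

def IsPathPartition (P : Finset (List V)) : Prop :=
  (∀ δ ∈ P, δ ≠ [] ∧ δ.Nodup) ∧ ∀ v, ∃! δ, δ ∈ P ∧ v ∈ δ

theorem IsPathPartition.disjoint (hP : IsPathPartition P) {δ δ' : List V} (hδ : δ ∈ P)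
    (hδ' : δ' ∈ P) (hne : δ ≠ δ') : δ.Disjoint δ' :=
  fun v hv hv' => hne ((hP.2 v).unique ⟨hδ, hv⟩ ⟨hδ', hv'⟩)

variable [DecidableEq V]

theorem existsUnique_mem_sdiff_union (hP : ∀ v : V, ∃! δ, δ ∈ P ∧ v ∈ δ) (hR : R ⊆ P)
    (hdisj : (R' : Set (List V)).Pairwise List.Disjoint)
    (hcover : ∀ v, (∃ δ ∈ R', v ∈ δ) ↔ ∃ ρ ∈ R, v ∈ ρ) (v : V) :
    ∃! δ, δ ∈ P \ R ∪ R' ∧ v ∈ δ := by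
  obtain ⟨δ₀, ⟨hδ₀P, hvδ₀⟩, huniq⟩ := hP v
  by_cases hδ₀R : δ₀ ∈ R
  · obtain ⟨δ, hδR', hvδ⟩ := (hcover v).2 ⟨δ₀, hδ₀R, hvδ₀⟩
    refine ⟨δ, ⟨mem_union_right _ hδR', hvδ⟩, ?_⟩
    rintro δ' ⟨hδ', hvδ'⟩
    rcases mem_union.1 hδ' with hδ' | hδ'R'
    · obtain ⟨hδ'P, hδ'R⟩ := mem_sdiff.1 hδ'
      exact absurd (huniq δ' ⟨hδ'P, hvδ'⟩ ▸ hδ₀R) hδ'R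
    · by_contra hne
      exact hdisj hδ'R' hδR' hne hvδ' hvδ
  · refine ⟨δ₀, ⟨mem_union_left _ (mem_sdiff.2 ⟨hδ₀P, hδ₀R⟩), hvδ₀⟩, ?_⟩
    rintro δ ⟨hδ, hvδ⟩
    rcases mem_union.1 hδ with hδ | hδR'
    · exact huniq δ ⟨(mem_sdiff.1 hδ).1, hvδ⟩
    · obtain ⟨ρ, hρR, hvρ⟩ := (hcover v).1 ⟨δ, hδR', hvδ⟩
      exact absurd (huniq ρ ⟨hR hρR, hvρ⟩ ▸ hρR) hδ₀R

theorem disjoint_sdiff_of_cover (hP : ∀ v : V, ∃! δ, δ ∈ P ∧ v ∈ δ) (hR : R ⊆ P)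
    (hR' : ∀ δ ∈ R', δ ≠ []) (hcover : ∀ v, (∃ δ ∈ R', v ∈ δ) → ∃ ρ ∈ R, v ∈ ρ) :
    Disjoint (P \ R) R' := by
  refine disjoint_right.2 fun δ hδR' hδ => ?_
  obtain ⟨hδP, hδR⟩ := mem_sdiff.1 hδ
  obtain ⟨v, hvδ⟩ := List.exists_mem_of_ne_nil δ (hR' δ hδR')
  obtain ⟨ρ, hρR, hvρ⟩ := hcover v ⟨δ, hδR', hvδ⟩
  exact hδR ((hP v).unique ⟨hR hρR, hvρ⟩ ⟨hδP, hvδ⟩ ▸ hρR)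

theorem IsPathPartition.sdiff_union (hP : IsPathPartition P) (hR : R ⊆ P)
    (hR' : ∀ δ ∈ R', δ ≠ [] ∧ δ.Nodup) (hdisj : (R' : Set (List V)).Pairwise List.Disjoint)
    (hcover : ∀ v, (∃ δ ∈ R', v ∈ δ) ↔ ∃ ρ ∈ R, v ∈ ρ) :
    IsPathPartition (P \ R ∪ R') ∧ #(P \ R ∪ R') + #R = #P + #R' := by
  refine ⟨⟨fun δ hδ => ?_, existsUnique_mem_sdiff_union hP.2 hR hdisj hcover⟩, ?_⟩
  · rcases mem_union.1 hδ with hδ | hδ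
    exacts [hP.1 δ (mem_sdiff.1 hδ).1, hR' δ hδ]
  · have hcard := card_sdiff_of_subset hR
    have hRP := card_le_card hR
    rw [card_union_of_disjoint
      (disjoint_sdiff_of_cover hP.2 hR (fun δ hδ => (hR' δ hδ).1) fun v => (hcover v).1)]
    omega

end PathPartition

section Splice

variable {V : Type*} {α β γ : List V}

theorem nodup_reverse_append_drop (hα : α.Nodup) (hγ : γ.Nodup) (hαγ : α.Disjoint γ) (j : ℕ) :
    (α.reverse ++ γ.drop j).Nodup :=
  (List.nodup_reverse.2 hα).append (hγ.sublist (List.drop_sublist _ _))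
    (List.disjoint_reverse_left.2 (List.disjoint_of_subset_right (List.drop_subset _ _) hαγ))

theorem nodup_take_append_reverse (hβ : β.Nodup) (hγ : γ.Nodup) (hβγ : β.Disjoint γ) (j : ℕ) :
    (γ.take j ++ β.reverse).Nodup :=
  (hγ.sublist (List.take_sublist _ _)).append (List.nodup_reverse.2 hβ)
    (List.disjoint_reverse_right.2
      (List.disjoint_of_subset_right (List.take_subset _ _) hβγ).symm)

theorem disjoint_splice (hγ : γ.Nodup) (hαβ : α.Disjoint β) (hαγ : α.Disjoint γ)
    (hβγ : β.Disjoint γ) (j : ℕ) :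
    (α.reverse ++ γ.drop j).Disjoint (γ.take j ++ β.reverse) := by
  simp only [List.disjoint_append_left, List.disjoint_append_right, List.disjoint_reverse_left,
    List.disjoint_reverse_right]
  exact ⟨⟨List.disjoint_of_subset_right (List.take_subset _ _) hαγ,
    (List.disjoint_take_drop hγ le_rfl).symm⟩,
    hαβ, (List.disjoint_of_subset_right (List.drop_subset _ _) hβγ).symm⟩

theorem mem_splice_iff (j : ℕ) (v : V) :
    v ∈ α.reverse ++ γ.drop j ∨ v ∈ γ.take j ++ β.reverse ↔ v ∈ α ∨ v ∈ β ∨ v ∈ γ := by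
  conv_rhs => rw [← List.take_append_drop j γ]
  simp only [List.mem_append, List.mem_reverse]
  tauto

end Splice

theorem stmt_16_general {V : Type*} [DecidableEq V]
    (P : Finset (List V))
    (hpaths : ∀ δ ∈ P, δ ≠ [] ∧ δ.Nodup)
    (hpart : ∀ v : V, ∃! δ, δ ∈ P ∧ v ∈ δ)
    (α β γ : List V) (hα : α ∈ P) (hβ : β ∈ P) (hγ : γ ∈ P)
    (hαβ : α ≠ β) (hαγ : α ≠ γ) (hβγ : β ≠ γ)
    (j : ℕ) :
    (∀ δ ∈ (P \ {α, β, γ}) ∪ {α.reverse ++ γ.drop j, γ.take j ++ β.reverse},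
        δ ≠ [] ∧ δ.Nodup) ∧
      (∀ v : V, ∃! δ,
        δ ∈ (P \ {α, β, γ}) ∪ {α.reverse ++ γ.drop j, γ.take j ++ β.reverse} ∧ v ∈ δ) ∧
      ((P \ {α, β, γ}) ∪ {α.reverse ++ γ.drop j, γ.take j ++ β.reverse}).card + 1 =
        P.card := by
  have hP : IsPathPartition P := ⟨hpaths, hpart⟩
  obtain ⟨hαne, hαnd⟩ := hpaths α hα
  obtain ⟨hβne, hβnd⟩ := hpaths β hβ
  have hγnd := (hpaths γ hγ).2
  have dαγ := hP.disjoint hα hγ hαγ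
  have dβγ := hP.disjoint hβ hγ hβγ
  have hAB := disjoint_splice hγnd (hP.disjoint hα hβ hαβ) dαγ dβγ j
  have hA : α.reverse ++ γ.drop j ≠ [] := by simp [hαne]
  have hB : γ.take j ++ β.reverse ≠ [] := by simp [hβne]
  have hAneB : α.reverse ++ γ.drop j ≠ γ.take j ++ β.reverse := fun h =>
    hA (List.eq_nil_iff_forall_not_mem.2 fun v hv => hAB hv (h ▸ hv))
  obtain ⟨⟨hpaths', hpart'⟩, hcard⟩ := hP.sdiff_union (R := {α, β, γ})
    (R' := {α.reverse ++ γ.drop j, γ.take j ++ β.reverse})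
    (by simp [insert_subset_iff, hα, hβ, hγ])
    (by simp only [mem_insert, mem_singleton]; rintro δ (rfl | rfl)
        exacts [⟨hA, nodup_reverse_append_drop hαnd hγnd dαγ j⟩,
          ⟨hB, nodup_take_append_reverse hβnd hγnd dβγ j⟩])
    (by rw [coe_pair, Set.pairwise_pair]; exact fun _ => ⟨hAB, hAB.symm⟩)
    (fun v => by simpa using mem_splice_iff j v)
  rw [card_pair hAneB, card_eq_three.2 ⟨α, β, γ, hαβ, hαγ, hβγ, rfl⟩] at hcard
  exact ⟨hpaths', hpart', by omega⟩

/-- let `P` be a family of vertex-disjoint paths partitioning the vertex set,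
with pairwise distinct paths `α, β, γ ∈ P`, where `a` is an endpoint (first vertex) of `α`,
`b` an endpoint (first vertex) of `β`, and `γ_{j-1}, γ_j` consecutive on `γ` (`0 < j <`
length of `γ`). Replacing `α, β, γ` by the two paths `(α reversed) ++ (γ from position j)`
(joined by the edge `a γ_j`) and `(γ up to position j) ++ (β reversed)` (joined by the edge
`γ_{j-1} b`) yields a family of `|P| - 1` vertex-disjoint paths partitioning the vertex set. -/
theorem stmt_16 {V : Type*} [Fintype V] [DecidableEq V]
    (P : Finset (List V))
    (hpaths : ∀ δ ∈ P, δ ≠ [] ∧ δ.Nodup)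
    (hpart : ∀ v : V, ∃! δ, δ ∈ P ∧ v ∈ δ)
    (hP2 : 2 ≤ P.card)
    (α β γ : List V) (hα : α ∈ P) (hβ : β ∈ P) (hγ : γ ∈ P)
    (hαβ : α ≠ β) (hαγ : α ≠ γ) (hβγ : β ≠ γ)
    (a b : V) (ha : α.head? = some a) (hb : β.head? = some b)
    (j : ℕ) (hj0 : 0 < j) (hjlen : j < γ.length) :
    (∀ δ ∈ (P \ {α, β, γ}) ∪ {α.reverse ++ γ.drop j, γ.take j ++ β.reverse},
        δ ≠ [] ∧ δ.Nodup) ∧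
      (∀ v : V, ∃! δ,
        δ ∈ (P \ {α, β, γ}) ∪ {α.reverse ++ γ.drop j, γ.take j ++ β.reverse} ∧ v ∈ δ) ∧
      ((P \ {α, β, γ}) ∪ {α.reverse ++ γ.drop j, γ.take j ++ β.reverse}).card + 1 =
        P.card :=
  stmt_16_general P hpaths hpart α β γ hα hβ hγ hαβ hαγ hβγ j
end

section
/- Let γ = γ_0 γ_1 … γ_n be a Hamilton path in a graph G. Suppose there exist indices 1 ≤ i < j ≤ n−1 such that γ_0 γ_i, γ_{i−1} γ_{j+1}, and γ_n γ_j are all edges available to be added. Then the edge set E(γ) ∪ {γ_0γ_i, γ_{i−1}γ_{j+1}, γ_nγ_j} minus {γ_{i−1}γ_i, γ_jγ_{j+1}} forms a Hamilton cycle. -/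
/-!
Reading the indices in the order `0, i, i+1, …, j, n, n-1, …, j+1, i-1, i-2, …, 1` lists every
vertex exactly once, and consecutive entries (cyclically) are joined either by one of the three
new edges or by a path edge `γ_k γ_{k+1}` with `k ≠ i-1, j`. Hence this order is a graph
isomorphism from the cycle graph on `n + 1 ≥ 3` vertices onto a spanning subgraph of the new
graph, and the image of the standard cycle is a Hamilton cycle.
-/

open Function SimpleGraph

namespace SimpleGraph

variable {V W : Type*}

theorem fromEdgeSet_image_adj {f : V → W} (hf : Injective f) {s : Set (Sym2 V)} {a b : V}
    (h : (fromEdgeSet s).Adj a b) : (fromEdgeSet (Sym2.map f '' s)).Adj (f a) (f b) := by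
  rw [fromEdgeSet_adj] at h ⊢
  exact ⟨⟨_, h.1, rfl⟩, hf.ne h.2⟩

theorem cycleGraph_adj_eq_add_one_or {n : ℕ} {u v : Fin (n + 1)}
    (h : (cycleGraph (n + 1)).Adj u v) : v = u + 1 ∨ u = v + 1 := by
  cases n with
  | zero => exact absurd h cycleGraph_one_adj
  | succ n =>
    rw [cycleGraph_adj, sub_eq_iff_eq_add, sub_eq_iff_eq_add] at h
    rcases h with h | h
    exacts [Or.inr (h.trans (add_comm _ _)), Or.inl (h.trans (add_comm _ _))]

theorem cycleGraph.isHamiltonianCycle_cycle (n : ℕ) : (cycleGraph.cycle n).IsHamiltonianCycle :=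
  Walk.isHamiltonianCycle_iff_isCycle_and_length_eq.mpr ⟨cycleGraph.isCycle_cycle, by simp⟩

theorem exists_isHamiltonianCycle_of_cyclic_adj [DecidableEq V] {G : SimpleGraph V} {n : ℕ}
    (hn : 2 ≤ n) (σ : Fin (n + 1) → V) (hσ : Bijective σ) (hadj : ∀ k, G.Adj (σ k) (σ (k + 1))) :
    ∃ (v : V) (c : G.Walk v v), c.IsHamiltonianCycle := by
  let φ : cycleGraph (n + 1) →g G := ⟨σ, fun h => by
    rcases cycleGraph_adj_eq_add_one_or h with rfl | rfl
    exacts [hadj _, (hadj _).symm]⟩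
  obtain ⟨m, rfl⟩ : ∃ m, n = m + 2 := ⟨n - 2, by omega⟩
  exact ⟨_, _, (cycleGraph.isHamiltonianCycle_cycle m).map (f := φ) hσ⟩

end SimpleGraph

section Rotation

variable {n : ℕ}

def rotationEdgeSet (n : ℕ) (i j : Fin (n + 1)) : Set (Sym2 (Fin (n + 1))) :=
  ({e | ∃ t : Fin n, e = s(t.castSucc, t.succ)} \ {s(i - 1, i), s(j, j + 1)}) ∪
    {s(0, i), s(i - 1, j + 1), s(Fin.last n, j)}

theorem image_rotationEdgeSet {V : Type*} (i j : Fin (n + 1)) {f : Fin (n + 1) → V}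
    (hf : Injective f) :
    Sym2.map f '' rotationEdgeSet n i j =
      ({e | ∃ t : Fin n, e = s(f t.castSucc, f t.succ)} \
          {s(f (i - 1), f i), s(f j, f (j + 1))}) ∪
        {s(f 0, f i), s(f (i - 1), f (j + 1)), s(f (Fin.last n), f j)} := by
  rw [rotationEdgeSet, Set.image_union, Set.image_sdiff (Sym2.map.injective hf)]
  simp only [Set.image_insert_eq, Set.image_singleton, Sym2.map_mk]
  congr
  ext e
  simp [eq_comm]

def RotationStep (n i j a b : ℕ) : Prop :=
  (b = a + 1 ∧ a ≠ i - 1 ∧ a ≠ j) ∨ (a = 0 ∧ b = i) ∨ (a = i - 1 ∧ b = j + 1) ∨ (a = n ∧ b = j)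

theorem adj_of_rotationStep {i j a b : Fin (n + 1)} (hi : 1 ≤ (i : ℕ)) (hij : (i : ℕ) < j)
    (hj : (j : ℕ) < n) (h : RotationStep n i j a b) :
    (fromEdgeSet (rotationEdgeSet n i j)).Adj a b := by
  have hi₁ : ((i - 1 : Fin (n + 1)) : ℕ) = i - 1 := by
    rw [Fin.coe_sub_one, if_neg (by rintro rfl; simp at hi)]
  have hj₁ : ((j + 1 : Fin (n + 1)) : ℕ) = j + 1 := by
    rw [Fin.val_add_one, if_neg (by rintro rfl; simp at hj)]
  rw [fromEdgeSet_adj]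
  refine ⟨?_, fun hab => by subst hab; unfold RotationStep at h; omega⟩
  rcases h with ⟨hb, ha₁, haj⟩ | h | h | h
  · refine Or.inl ⟨⟨⟨a, by omega⟩, ?_⟩, ?_⟩
    · simp [Fin.ext_iff, hb]
    · simp only [Set.mem_insert_iff, Set.mem_singleton_iff, Sym2.eq_iff, Fin.ext_iff, hi₁, hj₁]
      omega
  all_goals
    refine Or.inr ?_
    simp only [Set.mem_insert_iff, Set.mem_singleton_iff, Sym2.eq_iff, Fin.ext_iff, hi₁, hj₁,
      Fin.val_zero, Fin.val_last]
    omega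

/-- Position `t` of the cycle `0, i, …, j, n, …, j+1, i-1, …, 1`; it returns to `0` at `t = n+1`. -/
def rotationIndex (n i j t : ℕ) : ℕ :=
  if t = 0 then 0
  else if t ≤ j - i + 1 then i + t - 1
  else if t ≤ n - i + 1 then n + j - i + 2 - t
  else n + 1 - t

theorem rotationIndex_le {i j : ℕ} (hi : i ≤ n) (hj : j ≤ n) (t : ℕ) :
    rotationIndex n i j t ≤ n := by
  unfold rotationIndex
  split_ifs <;> omega

theorem rotationIndex_injOn {i j : ℕ} (hi : 1 ≤ i) (hij : i < j) {a b : ℕ} (ha : a ≤ n)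
    (hb : b ≤ n) (h : rotationIndex n i j a = rotationIndex n i j b) : a = b := by
  unfold rotationIndex at h
  split_ifs at h <;> omega

theorem rotationIndex_add_one_self {i j : ℕ} (hi : 1 ≤ i) (hin : i ≤ n) (hj : j ≤ n) :
    rotationIndex n i j (n + 1) = rotationIndex n i j 0 := by
  unfold rotationIndex
  split_ifs <;> omega

theorem rotationIndex_step {i j : ℕ} (hi : 1 ≤ i) (hij : i < j) (hj : j < n) {t : ℕ}
    (ht : t ≤ n) :
    RotationStep n i j (rotationIndex n i j t) (rotationIndex n i j (t + 1)) ∨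
      RotationStep n i j (rotationIndex n i j (t + 1)) (rotationIndex n i j t) := by
  unfold rotationIndex RotationStep
  split_ifs <;> first | contradiction | (left; omega) | (right; omega)

def rotationOrder (i j t : Fin (n + 1)) : Fin (n + 1) :=
  ⟨rotationIndex n i j t, Nat.lt_succ_of_le (rotationIndex_le i.is_le j.is_le t)⟩

theorem rotationOrder_bijective {i j : Fin (n + 1)} (hi : 1 ≤ (i : ℕ)) (hij : (i : ℕ) < j) :
    Bijective (rotationOrder i j) :=
  Finite.injective_iff_bijective.mp fun a b h =>
    Fin.ext (rotationIndex_injOn hi hij a.is_le b.is_le (Fin.val_eq_of_eq h))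

theorem val_rotationOrder_add_one {i j : Fin (n + 1)} (hi : 1 ≤ (i : ℕ)) (t : Fin (n + 1)) :
    (rotationOrder i j (t + 1) : ℕ) = rotationIndex n i j (t + 1) := by
  change rotationIndex n i j (t + 1 : Fin (n + 1)) = _
  rw [Fin.val_add_one]
  split_ifs with ht
  · rw [ht, Fin.val_last, rotationIndex_add_one_self hi i.is_le j.is_le]
  · rfl

theorem rotationOrder_adj {i j : Fin (n + 1)} (hi : 1 ≤ (i : ℕ)) (hij : (i : ℕ) < j)
    (hj : (j : ℕ) < n) (t : Fin (n + 1)) :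
    (fromEdgeSet (rotationEdgeSet n i j)).Adj (rotationOrder i j t) (rotationOrder i j (t + 1)) := by
  have hstep := rotationIndex_step hi hij hj t.is_le
  rw [← val_rotationOrder_add_one hi] at hstep
  rcases hstep with h | h
  exacts [adj_of_rotationStep hi hij hj h, (adj_of_rotationStep hi hij hj h).symm]

end Rotation

/-- rotation closing a Hamilton path into a Hamilton cycle. Let
`γ_0 γ_1 … γ_n` be a Hamilton path (an enumeration `γ` of all `n+1` vertices), and suppose
`1 ≤ i < j ≤ n-1`. Then deleting the edges `γ_{i-1}γ_i` and `γ_jγ_{j+1}` from the path and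
adding the edges `γ_0γ_i`, `γ_{i-1}γ_{j+1}` and `γ_nγ_j` yields the edge set of a graph
containing a Hamilton cycle. -/
theorem stmt_17 (n : ℕ) (hn : 2 ≤ n) (γ : Equiv.Perm (Fin (n + 1)))
    (i j : Fin (n + 1)) (hi : 1 ≤ (i : ℕ)) (hij : (i : ℕ) < (j : ℕ)) (hj : (j : ℕ) ≤ n - 1) :
    ∃ (v : Fin (n + 1))
      (c : (SimpleGraph.fromEdgeSet
        (({e : Sym2 (Fin (n + 1)) | ∃ t : Fin n, e = s(γ t.castSucc, γ t.succ)} \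
            {s(γ (i - 1), γ i), s(γ j, γ (j + 1))}) ∪
          {s(γ 0, γ i), s(γ (i - 1), γ (j + 1)), s(γ (Fin.last n), γ j)})).Walk v v),
      c.IsHamiltonianCycle := by
  have hjn : (j : ℕ) < n := by omega
  rw [← image_rotationEdgeSet i j γ.injective]
  exact exists_isHamiltonianCycle_of_cyclic_adj hn (γ ∘ rotationOrder i j)
    (γ.bijective.comp (rotationOrder_bijective hi hij))
    fun t => fromEdgeSet_image_adj γ.injective (rotationOrder_adj hi hij hjn t)
end
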